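/- arXiv:0809.1079 — 3 statements merged into one kernel-verified Lean document; each statement's English description precedes it below -/
import Mathlib

section
/- The fundamental domain $\Omega_H$ is the disjoint union of the sets $\Omega_H^{\{j\}}$ for $j = 1, \ldots, d+1$; that is, $\Omega_H = \bigcup_{j=1}^{d+1} \Omega_H^{\{j\}}$ and $\Omega_H^{\{i\}} \cap \Omega_H^{\{j\}} = \emptyset$ for $i \ne j$. -/
/-- The half-open fundamental domain of the lattice `A_d`. -/
def OmegaH (d : ℕ) : Set (Fin (d + 1) → ℝ) :=
  {t | (∑ i, t i = 0) ∧ ∀ i j : Fin (d + 1), i < j → -1 < t i - t j ∧ t i - t j ≤ 1}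

/-- The `j`-th parallelepiped piece of the fundamental domain. -/
def OmegaHpart (d : ℕ) (j : Fin (d + 1)) : Set (Fin (d + 1) → ℝ) :=
  {t | (∑ i, t i = 0) ∧ (∀ i : Fin (d + 1), i < j → 0 < t i - t j ∧ t i - t j ≤ 1) ∧
    ∀ l : Fin (d + 1), j < l → 0 ≤ t l - t j ∧ t l - t j < 1}

/-! A point `t` of `Ω_H` lies in the piece `Ω_H^{j}` for `j` the first index at which `t`
attains its minimum, and in no other: membership in `Ω_H^{j}` forces `t j ≤ t k` for all `k`, with
strict inequality for `k < j`. -/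

theorem exists_first_argmin {ι α : Type*} [Fintype ι] [Nonempty ι] [LinearOrder ι]
    [LinearOrder α] (f : ι → α) :
    ∃ j, (∀ l, f j ≤ f l) ∧ ∀ i, i < j → f j < f i := by
  obtain ⟨j, -, hj⟩ :=
    Finset.exists_min_image Finset.univ (fun k => toLex (f k, k)) Finset.univ_nonempty
  have hlex : ∀ k, f j < f k ∨ f j = f k ∧ j ≤ k := fun k =>
    Prod.Lex.toLex_le_toLex.mp (hj k (Finset.mem_univ k))
  refine ⟨j, fun l => ?_, fun i hij => ?_⟩
  · rcases hlex l with h | h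
    exacts [h.le, h.1.le]
  · rcases hlex i with h | h
    exacts [h, absurd h.2 (not_le.mpr hij)]

theorem mem_OmegaHpart_of_mem_OmegaH {d : ℕ} {t : Fin (d + 1) → ℝ} (ht : t ∈ OmegaH d)
    {j : Fin (d + 1)} (hmin : ∀ l, t j ≤ t l) (hfirst : ∀ i, i < j → t j < t i) :
    t ∈ OmegaHpart d j := by
  obtain ⟨hsum, hspread⟩ := ht
  refine ⟨hsum, fun i hij => ⟨?_, (hspread i j hij).2⟩, fun l hjl => ⟨?_, ?_⟩⟩
  · linarith [hfirst i hij]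
  · linarith [hmin l]
  · linarith [(hspread j l hjl).1]

theorem OmegaHpart_subset_OmegaH (d : ℕ) (j : Fin (d + 1)) : OmegaHpart d j ⊆ OmegaH d := by
  rintro t ⟨hsum, hbefore, hafter⟩
  have hunit : ∀ k, 0 ≤ t k - t j ∧ t k - t j ≤ 1 := by
    intro k
    rcases lt_trichotomy k j with hk | rfl | hk
    · exact ⟨(hbefore k hk).1.le, (hbefore k hk).2⟩
    · simp
    · exact ⟨(hafter k hk).1, (hafter k hk).2.le⟩
  refine ⟨hsum, fun i l hil => ⟨?_, by linarith [(hunit i).2, (hunit l).1]⟩⟩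
  -- `t i - t l > -1` because `t i - t j > 0` when `i < j`, and `t l - t j < 1` otherwise.
  rcases lt_or_ge i j with hij | hji
  · linarith [(hbefore i hij).1, (hunit l).2]
  · linarith [(hunit i).1, (hafter l (hji.trans_lt hil)).2]

theorem pairwise_disjoint_OmegaHpart (d : ℕ) :
    Pairwise (Function.onFun Disjoint (OmegaHpart d)) := by
  refine pairwise_disjoint_on _ |>.mpr fun i j hij => Set.disjoint_left.mpr ?_
  rintro t ⟨-, -, hafter⟩ ⟨-, hbefore, -⟩
  linarith [(hafter j hij).1, (hbefore i hij).1]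

/-- `Ω_H` is the disjoint union of the pieces `Ω_H^{j}`, `j = 1, …, d+1`. -/
theorem OmegaH_eq_disjUnion (d : ℕ) :
    (OmegaH d = ⋃ j : Fin (d + 1), OmegaHpart d j) ∧
    ∀ i j : Fin (d + 1), i ≠ j → OmegaHpart d i ∩ OmegaHpart d j = ∅ := by
  refine ⟨Set.Subset.antisymm (fun t ht => ?_) (Set.iUnion_subset (OmegaHpart_subset_OmegaH d)),
    fun i j hij => Set.disjoint_iff_inter_eq_empty.mp (pairwise_disjoint_OmegaHpart d hij)⟩
  obtain ⟨j, hmin, hfirst⟩ := exists_first_argmin t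
  exact Set.mem_iUnion.mpr ⟨j, mem_OmegaHpart_of_mem_OmegaH ht hmin hfirst⟩
end

section
/- For the Dirichlet kernel $D_n^H({\mathbf t}) = \sum_{{\mathbf k} \in {\mathbb H}_n^*} e^{\frac{2\pi i}{d+1} {\mathbf k} \cdot {\mathbf t}}$, one has $D_n^H({\mathbf t}) = \Theta_{n+1}({\mathbf t}) - \Theta_n({\mathbf t})$, where $\Theta_n({\mathbf t}) = \prod_{j=1}^{d+1} \frac{\sin \pi n t_j}{\sin \pi t_j}$, for all ${\mathbf t} \in {\mathbb R}_H^{d+1}$ where the right side is defined. -/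
open Real Complex

/-- The index set `ℍ_n^*`. -/
def Hstar (d n : ℕ) : Set (Fin (d + 1) → ℤ) :=
  {k | (∑ i, k i = 0) ∧ (∀ i j : Fin (d + 1), ((d : ℤ) + 1) ∣ (k i - k j)) ∧
    ∀ i j : Fin (d + 1), |k i - k j| ≤ ((d : ℤ) + 1) * n}

/-- The function `Θ_n(t) = ∏_j sin(π n t_j) / sin(π t_j)`. -/
noncomputable def ThetaFn (d : ℕ) (n : ℕ) (t : Fin (d + 1) → ℝ) : ℝ :=
  ∏ j, Real.sin (π * n * t j) / Real.sin (π * t j)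

/-!
Summing a geometric series in each coordinate writes `Θ_m(t)` as the exponential sum
`∑ e^{2πi l·t}` over the box `{0,…,m-1}^{d+1}`: the leftover phases `e^{πi(m-1)t_j}` multiply to
`1` because `∑ t_j = 0`. For the same reason the summand is invariant under `l ↦ l + 𝟙`, so
`Θ_{n+1} - Θ_n` is the sum over the tuples in `{0,…,n}^{d+1}` having a zero entry. These are in
bijection with `ℍ_n^*` via `l ↦ (d+1) l - (∑ l) 𝟙`, which multiplies `l·t` by exactly `d + 1`.
-/

theorem Complex.exp_two_mul_mul_I_sub_one (z : ℂ) :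
    exp (2 * z * I) - 1 = exp (z * I) * (2 * I * Complex.sin z) := by
  rw [Complex.sin, two_mul, add_mul, Complex.exp_add]
  have : exp (z * I) * exp (-z * I) = 1 := by
    rw [← Complex.exp_add, neg_mul, add_neg_cancel, Complex.exp_zero]
  linear_combination this + (exp (z * I) ^ 2 - exp (z * I) * exp (-z * I)) * I_sq

theorem geom_sum_exp_two_pi_mul_I (m : ℕ) {x : ℝ} (hx : Real.sin (π * x) ≠ 0) :
    ∑ l ∈ Finset.range m, exp (2 * π * I * l * x) =
      exp (π * I * (m - 1) * x) * (Real.sin (π * m * x) / Real.sin (π * x)) := by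
  have hsub (y : ℂ) :
      exp (2 * π * I * y) - 1 = exp (π * I * y) * (2 * I * Complex.sin (π * y)) := by
    convert exp_two_mul_mul_I_sub_one (π * y) using 2 <;> ring_nf
  have hx' : Complex.sin (π * x) ≠ 0 := by exact_mod_cast hx
  have hr : exp (2 * π * I * x) ≠ 1 := by
    rw [← sub_ne_zero, hsub]
    exact mul_ne_zero (exp_ne_zero _) (by simp [I_ne_zero, hx'])
  have hpow (l : ℕ) : exp (2 * π * I * x) ^ l = exp (2 * π * I * l * x) := by
    rw [← Complex.exp_nat_mul]; ring_nf
  have hsplit : exp (π * I * (m * x)) = exp (π * I * (m - 1) * x) * exp (π * I * x) := by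
    rw [← Complex.exp_add]; ring_nf
  simp_rw [← hpow, geom_sum_eq hr, hpow]
  push_cast
  rw [mul_assoc _ (m : ℂ), hsub, hsub, hsplit]
  field_simp

theorem prod_sin_div_sin_eq_sum_exp {ι : Type*} [Fintype ι] [DecidableEq ι] (m : ℕ)
    {t : ι → ℝ} (ht : ∑ i, t i = 0) (hsin : ∀ i, Real.sin (π * t i) ≠ 0) :
    ((∏ i, Real.sin (π * m * t i) / Real.sin (π * t i) : ℝ) : ℂ) =
      ∑ l ∈ Fintype.piFinset fun _ : ι => Finset.range m, exp (2 * π * I * ∑ i, (l i : ℂ) * t i) :=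
  calc ((∏ i, Real.sin (π * m * t i) / Real.sin (π * t i) : ℝ) : ℂ)
      = exp (∑ i, π * I * (m - 1) * t i) *
          ∏ i, ((Real.sin (π * m * t i) / Real.sin (π * t i) : ℝ) : ℂ) := by
        rw [← Finset.mul_sum, ← ofReal_sum, ht, ofReal_zero, mul_zero, Complex.exp_zero, one_mul,
          ofReal_prod]
    _ = ∏ i, ∑ l ∈ Finset.range m, exp (2 * π * I * l * t i) := by
        simp only [Complex.exp_sum, ← Finset.prod_mul_distrib, ofReal_div]
        exact Finset.prod_congr rfl fun i _ => (geom_sum_exp_two_pi_mul_I m (hsin i)).symm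
    _ = ∑ l ∈ Fintype.piFinset fun _ : ι => Finset.range m,
          exp (2 * π * I * ∑ i, (l i : ℂ) * t i) := by
        rw [Finset.prod_univ_sum]
        refine Finset.sum_congr rfl fun l _ => ?_
        rw [Finset.mul_sum, Complex.exp_sum]
        simp only [mul_assoc]

section MinZeroBox

variable (ι : Type*) [Fintype ι] [DecidableEq ι]

def minZeroBox (n : ℕ) : Finset (ι → ℕ) :=
  (Fintype.piFinset fun _ => Finset.range (n + 1)).filter fun l => ∃ i, l i = 0

variable {ι}

theorem sum_minZeroBox_eq_sub {M : Type*} [AddCommGroup M] (n : ℕ) {f : (ι → ℕ) → M}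
    (hf : ∀ l, f (l + 1) = f l) :
    ∑ l ∈ minZeroBox ι n, f l =
      ∑ l ∈ Fintype.piFinset (fun _ : ι => Finset.range (n + 1)), f l -
        ∑ l ∈ Fintype.piFinset (fun _ : ι => Finset.range n), f l := by
  have hpos : (Fintype.piFinset fun _ : ι => Finset.range (n + 1)).filter
      (fun l => ¬∃ i, l i = 0) =
        (Fintype.piFinset fun _ => Finset.range n).map (addRightEmbedding 1) := by
    ext l
    simp only [Finset.mem_filter, Finset.mem_map, Fintype.mem_piFinset, Finset.mem_range,
      not_exists, addRightEmbedding_apply]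
    constructor
    · rintro ⟨hlt, hne⟩
      refine ⟨l - 1, fun i => ?_, funext fun i => ?_⟩
      · have := hlt i; have := hne i; simp only [Pi.sub_apply, Pi.one_apply]; omega
      · have := hne i; simp only [Pi.add_apply, Pi.sub_apply, Pi.one_apply]; omega
    · rintro ⟨a, ha, rfl⟩
      exact ⟨fun i => by simpa using ha i, fun i => by simp⟩
  rw [eq_sub_iff_add_eq, ← Finset.sum_filter_add_sum_filter_not
    (Fintype.piFinset fun _ : ι => Finset.range (n + 1)) (fun l => ∃ i, l i = 0), hpos,
    Finset.sum_map]
  simp only [addRightEmbedding_apply, hf, minZeroBox]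

end MinZeroBox

def toHstar (d : ℕ) (l : Fin (d + 1) → ℕ) : Fin (d + 1) → ℤ :=
  fun i => ((d : ℤ) + 1) * l i - ∑ j, (l j : ℤ)

namespace toHstar

variable {d : ℕ}

theorem sub_apply (l : Fin (d + 1) → ℕ) (i j : Fin (d + 1)) :
    toHstar d l i - toHstar d l j = ((d : ℤ) + 1) * ((l i : ℤ) - l j) := by
  simp only [toHstar]; ring

theorem sum_mul {R : Type*} [CommRing R] (l : Fin (d + 1) → ℕ) {t : Fin (d + 1) → R}
    (ht : ∑ i, t i = 0) :
    ∑ i, (toHstar d l i : R) * t i = ((d : R) + 1) * ∑ i, (l i : R) * t i := by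
  simp only [toHstar, Int.cast_sub, Int.cast_mul, Int.cast_add, Int.cast_natCast, Int.cast_one,
    Int.cast_sum, sub_mul, Finset.sum_sub_distrib, ← Finset.mul_sum, ht, mul_zero, sub_zero,
    mul_assoc]

/-- `toHstar` is injective on tuples with a zero entry: equal images force `l - l'` to be
constant, and the zero entries of `l` and `l'` bound that constant from both sides. -/
theorem injOn_minZeroBox (n : ℕ) : Set.InjOn (toHstar d) (minZeroBox (Fin (d + 1)) n) := by
  intro l hl l' hl' h
  simp only [minZeroBox, Finset.coe_filter, Set.mem_ofPred_eq] at hl hl'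
  obtain ⟨-, i₀, hi₀⟩ := hl
  obtain ⟨-, j₀, hj₀⟩ := hl'
  have hdiff (i j : Fin (d + 1)) : (l i : ℤ) - l j = l' i - l' j := by
    have := sub_apply l i j
    rw [h, sub_apply] at this
    exact (mul_left_cancel₀ (by positivity) this).symm
  funext i
  have := hdiff i i₀; have := hdiff i j₀; have := hdiff j₀ i₀
  omega

theorem mem_Hstar {n : ℕ} {l : Fin (d + 1) → ℕ} (hl : ∀ i, l i ≤ n) : toHstar d l ∈ Hstar d n := by
  refine ⟨?_, fun i j => ⟨_, sub_apply l i j⟩, fun i j => ?_⟩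
  · simp only [toHstar, Finset.sum_sub_distrib, ← Finset.mul_sum, Finset.sum_const,
      Finset.card_univ, Fintype.card_fin, nsmul_eq_mul]
    push_cast; ring
  · rw [sub_apply, abs_mul, abs_of_pos (by positivity)]
    gcongr
    have := hl i; have := hl j
    rw [abs_le]; omega

theorem exists_eq_of_mem_Hstar {n : ℕ} {k : Fin (d + 1) → ℤ} (hk : k ∈ Hstar d n) :
    ∃ l ∈ minZeroBox (Fin (d + 1)) n, toHstar d l = k := by
  obtain ⟨hsum, hdvd, hbound⟩ := hk
  obtain ⟨j₀, -, hj₀⟩ := Finset.exists_min_image Finset.univ k Finset.univ_nonempty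
  choose q hq using fun i => hdvd i j₀
  have hq_nonneg (i : Fin (d + 1)) : 0 ≤ q i := by
    have := hj₀ i (Finset.mem_univ i)
    have := hq i
    nlinarith
  lift q to Fin (d + 1) → ℕ using hq_nonneg
  replace hq (i : Fin (d + 1)) : k i - k j₀ = ((d : ℤ) + 1) * q i := hq i
  have hd : (0 : ℤ) < d + 1 := by positivity
  have hsum_q : ∑ j, (q j : ℤ) = -k j₀ := by
    refine mul_left_cancel₀ hd.ne' ?_
    rw [Finset.mul_sum, ← Finset.sum_congr rfl fun j _ => hq j, Finset.sum_sub_distrib, hsum,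
      Finset.sum_const, Finset.card_univ, Fintype.card_fin]
    ring
  refine ⟨q, ?_, funext fun i => ?_⟩
  · simp only [minZeroBox, Finset.mem_filter, Fintype.mem_piFinset, Finset.mem_range]
    refine ⟨fun i => ?_, j₀, ?_⟩
    · have := hbound i j₀
      rw [hq i, abs_mul, abs_of_pos hd, Nat.abs_cast] at this
      have := le_of_mul_le_mul_left this hd
      omega
    · have := hq j₀
      rw [sub_self, zero_eq_mul] at this
      omega
  · simp only [toHstar, hsum_q, ← hq i]
    ring

theorem coe_image_minZeroBox (n : ℕ) :
    ((minZeroBox (Fin (d + 1)) n).image (toHstar d) : Set (Fin (d + 1) → ℤ)) = Hstar d n := by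
  ext k
  simp only [Finset.coe_image, Set.mem_image, Finset.mem_coe]
  refine ⟨?_, exists_eq_of_mem_Hstar⟩
  rintro ⟨l, hl, rfl⟩
  simp only [minZeroBox, Finset.mem_filter, Fintype.mem_piFinset, Finset.mem_range] at hl
  exact mem_Hstar fun i => Nat.le_of_lt_succ (hl.1 i)

end toHstar

/-- Compact formula for the Dirichlet kernel:
`D_n^H(t) = Θ_{n+1}(t) - Θ_n(t)` whenever `sin(π t_j) ≠ 0` for all `j`. -/
theorem dirichlet_kernel_compact (d n : ℕ) (t : Fin (d + 1) → ℝ)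
    (ht0 : ∑ i, t i = 0) (hsin : ∀ j, Real.sin (π * t j) ≠ 0) :
    ∑ᶠ k : Hstar d n,
        Complex.exp (2 * π * Complex.I / ((d : ℂ) + 1) * ∑ i, (k.1 i : ℂ) * (t i : ℂ)) =
      ((ThetaFn d (n + 1) t : ℝ) : ℂ) - ((ThetaFn d n t : ℝ) : ℂ) := by
  have htC : ∑ i, (t i : ℂ) = 0 := by exact_mod_cast ht0
  have hshift (l : Fin (d + 1) → ℕ) : ∑ i, ((l + 1) i : ℂ) * t i = ∑ i, (l i : ℂ) * t i := by
    simp only [Pi.add_apply, Pi.one_apply, Nat.cast_add, Nat.cast_one, add_mul, one_mul,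
      Finset.sum_add_distrib, htC, add_zero]
  rw [finsum_set_coe_eq_finsum_mem (f := fun k : Fin (d + 1) → ℤ =>
      exp (2 * π * I / ((d : ℂ) + 1) * ∑ i, (k i : ℂ) * t i)),
    ← toHstar.coe_image_minZeroBox, finsum_mem_coe_finset,
    Finset.sum_image (toHstar.injOn_minZeroBox n)]
  have hd : (d : ℂ) + 1 ≠ 0 := Nat.cast_add_one_ne_zero d
  simp only [toHstar.sum_mul _ htC, ← mul_assoc, div_mul_cancel₀ _ hd]
  rw [sum_minZeroBox_eq_sub n fun l => congrArg (fun s => exp (2 * π * I * s)) (hshift l),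
    ThetaFn, ThetaFn, prod_sin_div_sin_eq_sum_exp _ ht0 hsin,
    prod_sin_div_sin_eq_sum_exp _ ht0 hsin]
end

section
/- For any vectors ${\mathbf j}, {\mathbf k} \in {\mathbb H}$, the product of generalized cosines satisfies ${\mathsf{TC}}_{\mathbf j}({\mathbf t})\,{\mathsf{TC}}_{\mathbf k}({\mathbf t}) = \frac{1}{(d+1)!}\sum_{\sigma \in S_{d+1}} {\mathsf{TC}}_{{\mathbf k} + {\mathbf j}\sigma}({\mathbf t})$ for all ${\mathbf t} \in {\mathbb R}_H^{d+1}$. -/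
open Real Complex

/-- The exponential `φ_k(t) = e^{2πi k·t/(d+1)}`. -/
noncomputable def phiH (d : ℕ) (k : Fin (d + 1) → ℤ) (t : Fin (d + 1) → ℝ) : ℂ :=
  Complex.exp (2 * π * Complex.I / ((d : ℂ) + 1) * ∑ i, (k i : ℂ) * (t i : ℂ))

/-- The generalized cosine `TC_k`. -/
noncomputable def TCos (d : ℕ) (k : Fin (d + 1) → ℤ) (t : Fin (d + 1) → ℝ) : ℂ :=
  (1 / (Nat.factorial (d + 1) : ℂ)) * ∑ σ : Equiv.Perm (Fin (d + 1)), phiH d (k ∘ σ) t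

/-- The generalized sine `TS_k`. -/
noncomputable def TSin (d : ℕ) (k : Fin (d + 1) → ℤ) (t : Fin (d + 1) → ℝ) : ℂ :=
  (1 / (Nat.factorial (d + 1) : ℂ)) * ∑ σ : Equiv.Perm (Fin (d + 1)),
    ((Equiv.Perm.sign σ : ℤ) : ℂ) * phiH d (k ∘ σ) t

lemma phiH_add (d : ℕ) (a b : Fin (d + 1) → ℤ) (t : Fin (d + 1) → ℝ) :
    phiH d (a + b) t = phiH d a t * phiH d b t := by
  simp only [phiH, ← Complex.exp_add]
  congr 1
  rw [← mul_add, ← Finset.sum_add_distrib]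
  congr 1
  refine Finset.sum_congr rfl fun i _ => ?_
  simp only [Pi.add_apply]
  push_cast
  ring

/-- Product formula for generalized cosines:
`TC_j(t) TC_k(t) = (1/(d+1)!) ∑_σ TC_{k + jσ}(t)`. -/
theorem TCos_mul_TCos (d : ℕ) (j k : Fin (d + 1) → ℤ)
    (hj : (∑ i, j i = 0) ∧ ∀ a b : Fin (d + 1), ((d : ℤ) + 1) ∣ (j a - j b))
    (hk : (∑ i, k i = 0) ∧ ∀ a b : Fin (d + 1), ((d : ℤ) + 1) ∣ (k a - k b))
    (t : Fin (d + 1) → ℝ) (ht : ∑ i, t i = 0) :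
    TCos d j t * TCos d k t =
      (1 / (Nat.factorial (d + 1) : ℂ)) *
        ∑ σ : Equiv.Perm (Fin (d + 1)), TCos d (k + j ∘ σ) t := by
  classical
  have h : ∑ σ : Equiv.Perm (Fin (d + 1)), ∑ ρ : Equiv.Perm (Fin (d + 1)),
      phiH d (j ∘ σ) t * phiH d (k ∘ ρ) t
      = ∑ σ : Equiv.Perm (Fin (d + 1)), ∑ ρ : Equiv.Perm (Fin (d + 1)),
        phiH d ((k + j ∘ σ) ∘ ρ) t := by
    have key : ∀ σ ρ : Equiv.Perm (Fin (d + 1)),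
        phiH d ((k + j ∘ σ) ∘ ρ) t = phiH d (k ∘ ρ) t * phiH d (j ∘ ⇑(σ * ρ)) t := by
      intro σ ρ
      have : (k + j ∘ σ) ∘ ρ = k ∘ ρ + j ∘ ⇑(σ * ρ) := by
        funext i; simp [Equiv.Perm.mul_apply]
      rw [this, phiH_add]
    calc ∑ σ : Equiv.Perm (Fin (d + 1)), ∑ ρ : Equiv.Perm (Fin (d + 1)),
          phiH d (j ∘ σ) t * phiH d (k ∘ ρ) t
        = ∑ ρ : Equiv.Perm (Fin (d + 1)), ∑ σ : Equiv.Perm (Fin (d + 1)),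
            phiH d (k ∘ ρ) t * phiH d (j ∘ σ) t := by
          rw [Finset.sum_comm]; simp [mul_comm]
      _ = ∑ ρ : Equiv.Perm (Fin (d + 1)), ∑ σ : Equiv.Perm (Fin (d + 1)),
            phiH d (k ∘ ρ) t * phiH d (j ∘ ⇑(σ * ρ)) t := by
          refine Finset.sum_congr rfl fun ρ _ => ?_
          exact (Fintype.sum_equiv (Equiv.mulRight ρ)
            (fun σ => phiH d (k ∘ ρ) t * phiH d (j ∘ ⇑(σ * ρ)) t)
            (fun σ => phiH d (k ∘ ρ) t * phiH d (j ∘ σ) t)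
            (fun σ => rfl)).symm
      _ = ∑ σ : Equiv.Perm (Fin (d + 1)), ∑ ρ : Equiv.Perm (Fin (d + 1)),
            phiH d ((k + j ∘ σ) ∘ ρ) t := by
          rw [Finset.sum_comm]
          exact Finset.sum_congr rfl fun σ _ => Finset.sum_congr rfl fun ρ _ =>
            (key σ ρ).symm
  simp only [TCos]
  rw [mul_mul_mul_comm, Finset.sum_mul_sum, h]
  simp only [Finset.mul_sum, mul_assoc]
end
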